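/- For two horizontally adjacent marked vertices on the n×n torus with self-loop weight l = 4/n², the probability of measuring a marked vertex after any number t of steps of the lackadaisical search walk U' started from |ψ(0)⟩ is O(1/n²); concretely, p_M(t) ≤ C/n² for an absolute constant C independent of n and t. -/

import Mathlib

open Matrix

/-- Basis index of the walk space on the `n×n` torus with a 5-dimensional coin:
position `(i,j) ∈ (ℤ/nℤ)²` and coin `c ∈ Fin 5` with `0=↑, 1=↓, 2=←, 3=→, 4=↺`. -/
abbrev WalkIdx (n : ℕ) := ZMod n × ZMod n × Fin 5

/-- The action of the flip-flop shift with self-loop on basis indices. -/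
def shiftIdx (n : ℕ) : WalkIdx n → WalkIdx n
  | (i, j, c) =>
    if c = 0 then (i, j + 1, 1)
    else if c = 1 then (i, j - 1, 0)
    else if c = 2 then (i - 1, j, 3)
    else if c = 3 then (i + 1, j, 2)
    else (i, j, c)

/-- The flip-flop shift operator with self-loop, as a matrix:
`S|i,j,↑⟩=|i,j+1,↓⟩`, `S|i,j,↓⟩=|i,j−1,↑⟩`, `S|i,j,←⟩=|i−1,j,→⟩`,
`S|i,j,→⟩=|i+1,j,←⟩`, `S|i,j,↺⟩=|i,j,↺⟩` (indices mod `n`). -/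
noncomputable def shiftOp (n : ℕ) : Matrix (WalkIdx n) (WalkIdx n) ℂ :=
  fun x y => if x = shiftIdx n y then 1 else 0

/-- The Grover self-loop coin state `|s_c⟩`. -/
noncomputable def scState (l : ℝ) : Fin 5 → ℂ :=
  fun c => if c = 4 then (Real.sqrt l : ℂ) / (Real.sqrt (4 + l) : ℂ)
           else 1 / (Real.sqrt (4 + l) : ℂ)

/-- The 5-dimensional Grover coin `C = 2|s_c⟩⟨s_c| − I₅`. -/
noncomputable def groverCoin (l : ℝ) : Matrix (Fin 5) (Fin 5) ℂ :=
  (2 : ℂ) • Matrix.vecMulVec (scState l) (star (scState l)) - 1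

/-- The coin operator `I ⊗ C` on the full walk space. -/
noncomputable def coinOp (n : ℕ) (l : ℝ) : Matrix (WalkIdx n) (WalkIdx n) ℂ :=
  fun x y => if x.1 = y.1 ∧ x.2.1 = y.2.1 then groverCoin l x.2.2 y.2.2 else 0

/-- One step of the lackadaisical walk (without search): `U = S·(I ⊗ C)`. -/
noncomputable def walkOp (n : ℕ) [NeZero n] (l : ℝ) : Matrix (WalkIdx n) (WalkIdx n) ℂ :=
  shiftOp n * coinOp n l

/-- The query `Q ⊗ I₅`: flips the sign at the marked vertices `M`. -/
noncomputable def queryOp (n : ℕ) (M : Finset (ZMod n × ZMod n)) :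
    Matrix (WalkIdx n) (WalkIdx n) ℂ :=
  fun x y => if x = y then (if (x.1, x.2.1) ∈ M then -1 else 1) else 0

/-- One step of the search walk: `U' = S·(I⊗C)·(Q⊗I₅)`. -/
noncomputable def searchOp (n : ℕ) [NeZero n] (l : ℝ) (M : Finset (ZMod n × ZMod n)) :
    Matrix (WalkIdx n) (WalkIdx n) ℂ :=
  shiftOp n * coinOp n l * queryOp n M

/-- The uniform initial state `|ψ(0)⟩ = (1/n) Σ_{i,j} |i,j⟩ ⊗ |s_c⟩`. -/
noncomputable def psi0 (n : ℕ) (l : ℝ) : WalkIdx n → ℂ :=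
  fun x => (1 / (n : ℂ)) * scState l x.2.2

/-- The probability of finding a marked vertex after `t` steps of the search walk
started from the uniform state. -/
noncomputable def probMarked (n : ℕ) [NeZero n] (l : ℝ)
    (M : Finset (ZMod n × ZMod n)) (t : ℕ) : ℝ :=
  ∑ x : WalkIdx n, if (x.1, x.2.1) ∈ M
    then ‖((searchOp n l M ^ t).mulVec (psi0 n l)) x‖ ^ 2 else 0

/-!
The initial state splits as `ψ(0) = φ_stat + φ`, where `φ_stat` is fixed by `U'` and `φ` lives on
the two arcs of the edge joining the marked vertices, with `‖φ‖² = 2(4+l)/n²`. On a marked vertex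
`φ_stat` is orthogonal to `|s_c⟩`, so the sign flip followed by the Grover coin leaves it unchanged;
on an unmarked vertex it is `|s_c⟩/n`, which the coin fixes; and it is invariant under the
flip-flop shift. As `U'` is unitary, `U'^t ψ(0) = ψ(0) - φ + U'^t φ`, where `ψ(0)` has weight
`2/n²` on the marked vertices and `φ`, `U'^t φ` have total weight `2(4+l)/n²` each, so
`p_M(t) ≤ 3 (2 + 4(4+l)) / n²`.
-/

section Unitary

variable {m : Type*} [Fintype m]

theorem star_dotProduct_self_eq_sum_norm_sq (u : m → ℂ) :
    star u ⬝ᵥ u = ((∑ x, ‖u x‖ ^ 2 : ℝ) : ℂ) := by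
  simp [dotProduct, Complex.mul_conj', mul_comm]

variable [DecidableEq m]

theorem reflection_mulVec (s v : m → ℂ) :
    ((2 : ℂ) • vecMulVec s (star s) - 1) *ᵥ v = (2 * (star s ⬝ᵥ v)) • s - v := by
  ext x
  simp [sub_mulVec, smul_mulVec, vecMulVec_mulVec, mul_comm, mul_left_comm]

theorem reflection_mem_unitaryGroup {s : m → ℂ} (hs : star s ⬝ᵥ s = 1) :
    (2 : ℂ) • vecMulVec s (star s) - 1 ∈ unitaryGroup m ℂ := by
  have hP : vecMulVec s (star s) * vecMulVec s (star s) = vecMulVec s (star s) := by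
    rw [vecMulVec_mul_vecMulVec, hs, one_smul]
  have hself :
      star ((2 : ℂ) • vecMulVec s (star s) - 1) = (2 : ℂ) • vecMulVec s (star s) - 1 := by
    rw [star_sub, star_one, star_smul, star_eq_conjTranspose, conjTranspose_vecMulVec, star_star]
    norm_num
  rw [mem_unitaryGroup_iff', hself, sub_mul, mul_sub, mul_sub, smul_mul_smul_comm, hP]
  simp only [mul_one, one_mul]
  module

theorem sum_norm_sq_mulVec_of_mem_unitaryGroup {A : Matrix m m ℂ} (hA : A ∈ unitaryGroup m ℂ)
    (v : m → ℂ) : ∑ x, ‖(A *ᵥ v) x‖ ^ 2 = ∑ x, ‖v x‖ ^ 2 := by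
  have key : star (A *ᵥ v) ⬝ᵥ (A *ᵥ v) = star v ⬝ᵥ v := by
    rw [star_mulVec, dotProduct_mulVec, vecMul_vecMul, ← star_eq_conjTranspose,
      (mem_unitaryGroup_iff').mp hA, vecMul_one]
  rw [star_dotProduct_self_eq_sum_norm_sq, star_dotProduct_self_eq_sum_norm_sq] at key
  exact_mod_cast key

end Unitary

theorem norm_sub_add_sq_le {E : Type*} [SeminormedAddCommGroup E] (a b c : E) :
    ‖a - b + c‖ ^ 2 ≤ 3 * (‖a‖ ^ 2 + ‖b‖ ^ 2 + ‖c‖ ^ 2) := by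
  have h₁ := norm_add_le (a - b) c
  have h₂ := norm_sub_le a b
  nlinarith [norm_nonneg (a - b + c), norm_nonneg (a - b), norm_nonneg a, norm_nonneg b,
    norm_nonneg c, sq_nonneg (‖a‖ - ‖b‖), sq_nonneg (‖b‖ - ‖c‖), sq_nonneg (‖a‖ - ‖c‖)]

theorem sum_ite_norm_sub_add_sq_le {ι E : Type*} [Fintype ι] [SeminormedAddCommGroup E]
    (p : ι → Prop) [DecidablePred p] (a b c : ι → E) :
    ∑ x, (if p x then ‖a x - b x + c x‖ ^ 2 else 0) ≤
      3 * (∑ x, (if p x then ‖a x‖ ^ 2 else 0) + ∑ x, ‖b x‖ ^ 2 + ∑ x, ‖c x‖ ^ 2) := by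
  simp only [Finset.mul_sum, ← Finset.sum_add_distrib]
  refine Finset.sum_le_sum fun x _ => ?_
  split_ifs
  · linarith [norm_sub_add_sq_le (a x) (b x) (c x)]
  · positivity

section GroverCoin

variable {l : ℝ}

theorem star_scState (l : ℝ) : star (scState l) = scState l := by
  ext c
  simp only [Pi.star_apply, scState]
  split_ifs <;> simp [← Complex.ofReal_one, ← Complex.ofReal_div, Complex.conj_ofReal]

theorem star_scState_dotProduct_self (hl : 0 ≤ l) : star (scState l) ⬝ᵥ scState l = 1 := by
  have h4 : (0 : ℝ) < 4 + l := by linarith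
  rw [star_scState, dotProduct, Fin.sum_univ_five]
  simp only [scState, Fin.reduceEq, if_false, if_true]
  have hs : ((√(4 + l) : ℝ) : ℂ) ≠ 0 := by exact_mod_cast (Real.sqrt_pos.mpr h4).ne'
  field_simp
  rw [← Complex.ofReal_pow, ← Complex.ofReal_pow, Real.sq_sqrt hl, Real.sq_sqrt h4.le]
  push_cast
  ring

theorem groverCoin_mem_unitaryGroup (hl : 0 ≤ l) : groverCoin l ∈ unitaryGroup (Fin 5) ℂ :=
  reflection_mem_unitaryGroup (star_scState_dotProduct_self hl)

theorem groverCoin_mulVec_scState (hl : 0 ≤ l) : groverCoin l *ᵥ scState l = scState l := by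
  rw [groverCoin, reflection_mulVec, star_scState_dotProduct_self hl]
  module

theorem groverCoin_mulVec_neg_of_dotProduct_eq_zero {v : Fin 5 → ℂ}
    (hv : star (scState l) ⬝ᵥ v = 0) : groverCoin l *ᵥ (-v) = v := by
  rw [groverCoin, reflection_mulVec, dotProduct_neg, hv]
  simp

theorem sum_norm_sq_scState (hl : 0 ≤ l) : ∑ c, ‖scState l c‖ ^ 2 = 1 := by
  exact_mod_cast (star_dotProduct_self_eq_sum_norm_sq (scState l)).symm.trans
    (star_scState_dotProduct_self hl)

end GroverCoin

section WalkOperators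

variable {n : ℕ} [NeZero n] {l : ℝ}

theorem shiftIdx_involutive (n : ℕ) : Function.Involutive (shiftIdx n) := by
  rintro ⟨i, j, c⟩
  fin_cases c <;> simp [shiftIdx]

theorem shiftOp_mulVec (v : WalkIdx n → ℂ) : shiftOp n *ᵥ v = v ∘ shiftIdx n := by
  ext x
  have hx : ∀ y, x = shiftIdx n y ↔ y = shiftIdx n x :=
    fun y => eq_comm.trans (shiftIdx_involutive n).eq_iff
  simp [mulVec, dotProduct, shiftOp, hx]

theorem coinOp_mulVec (v : WalkIdx n → ℂ) (i j : ZMod n) (c : Fin 5) :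
    (coinOp n l *ᵥ v) (i, j, c) = (groverCoin l *ᵥ fun c' => v (i, j, c')) c := by
  simp [mulVec, dotProduct, coinOp, Fintype.sum_prod_type, ite_and]

theorem queryOp_mulVec (M : Finset (ZMod n × ZMod n)) (v : WalkIdx n → ℂ) (x : WalkIdx n) :
    (queryOp n M *ᵥ v) x = (if (x.1, x.2.1) ∈ M then -v x else v x) := by
  by_cases hx : (x.1, x.2.1) ∈ M <;> simp [mulVec, dotProduct, queryOp, hx]

theorem sum_norm_sq_shiftOp_mulVec (v : WalkIdx n → ℂ) :
    ∑ x, ‖(shiftOp n *ᵥ v) x‖ ^ 2 = ∑ x, ‖v x‖ ^ 2 := by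
  rw [shiftOp_mulVec]
  exact Equiv.sum_comp (shiftIdx_involutive n).toPerm fun x => ‖v x‖ ^ 2

theorem sum_norm_sq_coinOp_mulVec (hl : 0 ≤ l) (v : WalkIdx n → ℂ) :
    ∑ x, ‖(coinOp n l *ᵥ v) x‖ ^ 2 = ∑ x, ‖v x‖ ^ 2 := by
  simp only [Fintype.sum_prod_type, coinOp_mulVec,
    sum_norm_sq_mulVec_of_mem_unitaryGroup (groverCoin_mem_unitaryGroup hl)]

theorem sum_norm_sq_queryOp_mulVec (M : Finset (ZMod n × ZMod n)) (v : WalkIdx n → ℂ) :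
    ∑ x, ‖(queryOp n M *ᵥ v) x‖ ^ 2 = ∑ x, ‖v x‖ ^ 2 := by
  simp [queryOp_mulVec, apply_ite]

theorem sum_norm_sq_searchOp_mulVec (hl : 0 ≤ l) (M : Finset (ZMod n × ZMod n))
    (v : WalkIdx n → ℂ) : ∑ x, ‖(searchOp n l M *ᵥ v) x‖ ^ 2 = ∑ x, ‖v x‖ ^ 2 := by
  rw [searchOp, ← mulVec_mulVec, ← mulVec_mulVec, sum_norm_sq_shiftOp_mulVec,
    sum_norm_sq_coinOp_mulVec hl, sum_norm_sq_queryOp_mulVec]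

theorem sum_norm_sq_searchOp_pow_mulVec (hl : 0 ≤ l) (M : Finset (ZMod n × ZMod n))
    (t : ℕ) (v : WalkIdx n → ℂ) :
    ∑ x, ‖(searchOp n l M ^ t *ᵥ v) x‖ ^ 2 = ∑ x, ‖v x‖ ^ 2 := by
  induction t with
  | zero => simp
  | succ t ih =>
    rw [pow_succ', ← mulVec_mulVec, sum_norm_sq_searchOp_mulVec hl, ih]

end WalkOperators

section StationaryState

variable {n : ℕ} {l : ℝ} {i₀ j₀ : ZMod n}

/- `markedEdgeState` and `stationaryState` are the paper's `|φ⟩` and `|φ_stat^a⟩`: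
the amplitude `(4 + l) a` of `|φ⟩` equals `√(4 + l) / n`. -/
noncomputable def markedEdgeState (n : ℕ) (l : ℝ) (i₀ j₀ : ZMod n) : WalkIdx n → ℂ :=
  fun x => if x = (i₀, j₀, 3) ∨ x = (i₀ + 1, j₀, 2) then ((√(4 + l) / n : ℝ) : ℂ) else 0

noncomputable def stationaryState (n : ℕ) (l : ℝ) (i₀ j₀ : ZMod n) : WalkIdx n → ℂ :=
  psi0 n l - markedEdgeState n l i₀ j₀

theorem stationaryState_shiftIdx (x : WalkIdx n) :
    stationaryState n l i₀ j₀ (shiftIdx n x) = stationaryState n l i₀ j₀ x := by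
  obtain ⟨i, j, c⟩ := x
  fin_cases c <;>
    simp [shiftIdx, stationaryState, markedEdgeState, psi0, scState, Prod.ext_iff,
      sub_eq_iff_eq_add]

theorem stationaryState_fiber_of_not_mem {i j : ZMod n}
    (hij : (i, j) ∉ ({(i₀, j₀), (i₀ + 1, j₀)} : Finset (ZMod n × ZMod n))) :
    (fun c => stationaryState n l i₀ j₀ (i, j, c)) = (1 / n : ℂ) • scState l := by
  ext c
  have hφ : markedEdgeState n l i₀ j₀ (i, j, c) = 0 := if_neg (by aesop)
  simp [stationaryState, psi0, hφ]

theorem star_scState_dotProduct_stationaryState_fiber [NeZero n] (hl : 0 ≤ l)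
    (hi₀ : i₀ + 1 ≠ i₀) {i j : ZMod n}
    (hij : (i, j) ∈ ({(i₀, j₀), (i₀ + 1, j₀)} : Finset (ZMod n × ZMod n))) :
    star (scState l) ⬝ᵥ (fun c => stationaryState n l i₀ j₀ (i, j, c)) = 0 := by
  have h4 : (0 : ℝ) < 4 + l := by linarith
  have hs : ((√(4 + l) : ℝ) : ℂ) ≠ 0 := by exact_mod_cast (Real.sqrt_pos.mpr h4).ne'
  have hn : (n : ℂ) ≠ 0 := NeZero.ne _
  have hsq : ((√(4 + l) : ℝ) : ℂ) ^ 2 = 4 + l := by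
    rw [← Complex.ofReal_pow, Real.sq_sqrt h4.le]; push_cast; ring
  have hsql : ((√l : ℝ) : ℂ) ^ 2 = l := by rw [← Complex.ofReal_pow, Real.sq_sqrt hl]
  simp only [Finset.mem_insert, Finset.mem_singleton, Prod.ext_iff] at hij
  rw [star_scState, dotProduct, Fin.sum_univ_five]
  rcases hij with ⟨rfl, rfl⟩ | ⟨rfl, rfl⟩
  · simp [stationaryState, markedEdgeState, psi0, scState, hi₀.symm]
    field_simp
    linear_combination hsql - hsq
  · simp [stationaryState, markedEdgeState, psi0, scState, hi₀]
    field_simp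
    linear_combination hsql - hsq

theorem coinOp_mulVec_queryOp_mulVec_stationaryState [NeZero n] (hl : 0 ≤ l)
    (hi₀ : i₀ + 1 ≠ i₀) :
    coinOp n l *ᵥ (queryOp n {(i₀, j₀), (i₀ + 1, j₀)} *ᵥ stationaryState n l i₀ j₀) =
      stationaryState n l i₀ j₀ := by
  ext ⟨i, j, c⟩
  rw [coinOp_mulVec]
  simp only [queryOp_mulVec]
  by_cases hij : (i, j) ∈ ({(i₀, j₀), (i₀ + 1, j₀)} : Finset (ZMod n × ZMod n))
  · simp only [hij, if_true]
    exact congrFun (groverCoin_mulVec_neg_of_dotProduct_eq_zero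
      (star_scState_dotProduct_stationaryState_fiber hl hi₀ hij)) c
  · simp only [hij, if_false]
    rw [stationaryState_fiber_of_not_mem hij, mulVec_smul, groverCoin_mulVec_scState hl,
      ← stationaryState_fiber_of_not_mem hij]

theorem searchOp_mulVec_stationaryState [NeZero n] (hl : 0 ≤ l) (hi₀ : i₀ + 1 ≠ i₀) :
    searchOp n l {(i₀, j₀), (i₀ + 1, j₀)} *ᵥ stationaryState n l i₀ j₀ =
      stationaryState n l i₀ j₀ := by
  rw [searchOp, ← mulVec_mulVec, ← mulVec_mulVec,
    coinOp_mulVec_queryOp_mulVec_stationaryState hl hi₀, shiftOp_mulVec]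
  exact funext stationaryState_shiftIdx

theorem searchOp_pow_mulVec_stationaryState [NeZero n] (hl : 0 ≤ l) (hi₀ : i₀ + 1 ≠ i₀)
    (t : ℕ) :
    searchOp n l {(i₀, j₀), (i₀ + 1, j₀)} ^ t *ᵥ stationaryState n l i₀ j₀ =
      stationaryState n l i₀ j₀ := by
  induction t with
  | zero => simp
  | succ t ih => rw [pow_succ', ← mulVec_mulVec, ih, searchOp_mulVec_stationaryState hl hi₀]

theorem searchOp_pow_mulVec_psi0 [NeZero n] (hl : 0 ≤ l) (hi₀ : i₀ + 1 ≠ i₀) (t : ℕ) :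
    searchOp n l {(i₀, j₀), (i₀ + 1, j₀)} ^ t *ᵥ psi0 n l =
      stationaryState n l i₀ j₀ +
        searchOp n l {(i₀, j₀), (i₀ + 1, j₀)} ^ t *ᵥ markedEdgeState n l i₀ j₀ := by
  conv_lhs => rw [← sub_add_cancel (psi0 n l) (markedEdgeState n l i₀ j₀)]
  rw [mulVec_add, ← stationaryState, searchOp_pow_mulVec_stationaryState hl hi₀]

end StationaryState

section Weights

variable {n : ℕ} [NeZero n] {l : ℝ}

theorem sum_ite_mem_norm_sq_psi0 (hl : 0 ≤ l) (M : Finset (ZMod n × ZMod n)) :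
    ∑ x : WalkIdx n, (if (x.1, x.2.1) ∈ M then ‖psi0 n l x‖ ^ 2 else 0) =
      M.card / (n : ℝ) ^ 2 := by
  have hfiber : ∀ p : ZMod n × ZMod n,
      ∑ c, (if p ∈ M then ‖psi0 n l (p.1, p.2, c)‖ ^ 2 else 0) =
        if p ∈ M then 1 / (n : ℝ) ^ 2 else 0 := by
    intro p
    split_ifs
    · simp [psi0, mul_pow, ← Finset.mul_sum, sum_norm_sq_scState hl]
    · simp
  rw [← (Equiv.prodAssoc _ _ _).sum_comp, Fintype.sum_prod_type]
  simp only [Equiv.prodAssoc_apply, hfiber]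
  rw [Finset.sum_ite_mem, Finset.univ_inter, Finset.sum_const, nsmul_eq_mul]
  ring

theorem sum_norm_sq_markedEdgeState (hl : 0 ≤ l) (i₀ j₀ : ZMod n) :
    ∑ x, ‖markedEdgeState n l i₀ j₀ x‖ ^ 2 = 2 * (4 + l) / (n : ℝ) ^ 2 := by
  rw [Fintype.sum_eq_add (i₀, j₀, 3) (i₀ + 1, j₀, 2) (by simp)]
  · have hval : ‖((√(4 + l) / n : ℝ) : ℂ)‖ ^ 2 = (4 + l) / (n : ℝ) ^ 2 := by
      rw [Complex.norm_real, Real.norm_eq_abs, sq_abs, div_pow, Real.sq_sqrt (by linarith)]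
    simp only [markedEdgeState, true_or, or_true, if_true, hval]
    ring
  · rintro x ⟨h3, h2⟩
    simp [markedEdgeState, h3, h2]

end Weights

theorem probMarked_adjacent_le {n : ℕ} [NeZero n] {l : ℝ} {i₀ : ZMod n} (hl : 0 ≤ l)
    (hi₀ : i₀ + 1 ≠ i₀) (j₀ : ZMod n) (t : ℕ) :
    probMarked n l {(i₀, j₀), (i₀ + 1, j₀)} t ≤
      3 * (2 + 2 * (4 + l) + 2 * (4 + l)) / (n : ℝ) ^ 2 := by
  simp only [probMarked, searchOp_pow_mulVec_psi0 hl hi₀, Pi.add_apply, stationaryState,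
    Pi.sub_apply]
  refine (sum_ite_norm_sub_add_sq_le _ _ _ _).trans ?_
  rw [sum_ite_mem_norm_sq_psi0 hl, sum_norm_sq_searchOp_pow_mulVec hl,
    sum_norm_sq_markedEdgeState hl, ← add_div, ← add_div, mul_div_assoc']
  have hcard : (({(i₀, j₀), (i₀ + 1, j₀)} : Finset (ZMod n × ZMod n)).card : ℝ) ≤ 2 := by
    exact_mod_cast Finset.card_le_two
  gcongr

/-- Lemma 2: for two horizontally adjacent marked vertices and self-loop weight
`l = 4/n²`, the probability of finding a marked vertex after any number of steps
is `O(1/n²)`. -/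
theorem probMarked_le :
    ∃ C : ℝ, 0 < C ∧ ∀ (n : ℕ) [NeZero n], 3 ≤ n → ∀ (i₀ j₀ : ZMod n) (t : ℕ),
      probMarked n (4 / (n : ℝ) ^ 2) {(i₀, j₀), (i₀ + 1, j₀)} t ≤ C / (n : ℝ) ^ 2 := by
  refine ⟨102, by norm_num, fun n _ hn i₀ j₀ t => ?_⟩
  have hl : 0 ≤ 4 / (n : ℝ) ^ 2 := by positivity
  have hl4 : 4 / (n : ℝ) ^ 2 ≤ 4 :=
    div_le_self (by norm_num) (one_le_pow₀ (by exact_mod_cast NeZero.one_le))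
  have hi₀ : i₀ + 1 ≠ i₀ := by
    have : Fact (1 < n) := ⟨by omega⟩
    simp
  refine (probMarked_adjacent_le hl hi₀ j₀ t).trans ?_
  gcongr
  linarith
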